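/- arXiv:1808.00205 — 5 statements merged into one kernel-verified Lean document; each statement's English description precedes it below -/
import Mathlib

section
/- Assume Martin's Axiom and ¬CH. Let 𝒜, ℬ, 𝒞 be families of subsets of ℕ with |𝒜| ≤ ℵ₀, |ℬ| < 𝔠 and |𝒞| < 𝔠. Assume: (i) every A ∈ 𝒜 is almost disjoint from every B ∈ ℬ; (ii) no C ∈ 𝒞 is almost contained in a union of finitely many elements of 𝒜; (iii) no C ∈ 𝒞 is almost contained in a union of finitely many elements of ℬ. Then there exists S ⊆ ℕ such that A ⊆* S for every A ∈ 𝒜, B ∩ S is finite for every B ∈ ℬ, and both C ∩ S and C \ S are infinite for every C ∈ 𝒞. -/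
open Cardinal Set Filter Topology

/-- A preorder satisfies the countable chain condition if every set of pairwise
incompatible elements is countable. -/
def IsCCC (P : Type) [Preorder P] : Prop :=
  ∀ A : Set P, (∀ p ∈ A, ∀ q ∈ A, p ≠ q → ¬∃ r : P, r ≤ p ∧ r ≤ q) → A.Countable

/-- A subset `D` of a preorder is dense if every element has a lower bound in `D`. -/
def DenseBelow {P : Type} [Preorder P] (D : Set P) : Prop :=
  ∀ p : P, ∃ d ∈ D, d ≤ p

/-- A filter on a preorder: nonempty, upward closed and downward directed. -/
def IsPosetFilter {P : Type} [Preorder P] (G : Set P) : Prop :=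
  G.Nonempty ∧ (∀ p ∈ G, ∀ q : P, p ≤ q → q ∈ G) ∧
    ∀ p ∈ G, ∀ q ∈ G, ∃ r ∈ G, r ≤ p ∧ r ≤ q

/-- Martin's Axiom: for every nonempty ccc partial order and every family of fewer than
continuum many dense sets, there is a filter meeting all of them. -/
def MartinsAxiom : Prop :=
  ∀ (P : Type) [PartialOrder P] [Nonempty P], IsCCC P →
    ∀ 𝒟 : Set (Set P), (∀ D ∈ 𝒟, DenseBelow D) → #𝒟 < Cardinal.continuum →
      ∃ G : Set P, IsPosetFilter G ∧ ∀ D ∈ 𝒟, (G ∩ D).Nonempty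
open scoped Classical in
/-- Conditions for almost-disjoint style forcing. -/
structure Cond (𝒜 ℬ : Set (Set ℕ)) where
  s : Finset ℕ
  n : ℕ
  F : Finset (Set ℕ)
  G : Finset (Set ℕ)
  hs : ∀ k ∈ s, k < n
  hF : ↑F ⊆ 𝒜
  hG : ↑G ⊆ ℬ
  hFG : ∀ k, (∃ A ∈ F, k ∈ A) → (∃ B ∈ G, k ∈ B) → k < n

namespace Cond

variable {𝒜 ℬ : Set (Set ℕ)}

theorem ext' {p q : Cond 𝒜 ℬ} (h1 : p.s = q.s) (h2 : p.n = q.n)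
    (h3 : p.F = q.F) (h4 : p.G = q.G) : p = q := by
  cases p; cases q; simp_all

/-- `q` extends `p`. -/
def Le (q p : Cond 𝒜 ℬ) : Prop :=
  p.n ≤ q.n ∧ p.F ⊆ q.F ∧ p.G ⊆ q.G ∧
    (∀ k < p.n, (k ∈ q.s ↔ k ∈ p.s)) ∧
    ∀ k, p.n ≤ k → k < q.n →
      ((∃ A ∈ p.F, k ∈ A) → k ∈ q.s) ∧ ((∃ B ∈ p.G, k ∈ B) → k ∉ q.s)

instance : PartialOrder (Cond 𝒜 ℬ) where
  le := Le
  le_refl p := ⟨le_rfl, le_rfl, le_rfl, fun _ _ => Iff.rfl,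
    fun k h1 h2 => absurd h2 (not_lt.2 h1)⟩
  le_trans a b c hab hbc := by
    obtain ⟨hn1, hF1, hG1, hs1, hx1⟩ := hab
    obtain ⟨hn2, hF2, hG2, hs2, hx2⟩ := hbc
    refine ⟨hn2.trans hn1, hF2.trans hF1, hG2.trans hG1, ?_, ?_⟩
    · intro k hk
      exact (hs1 k (hk.trans_le hn2)).trans (hs2 k hk)
    · intro k hk1 hk2
      rcases lt_or_ge k b.n with h | h
      · constructor
        · intro hA
          exact (hs1 k h).2 ((hx2 k hk1 h).1 hA)
        · intro hB hks
          exact (hx2 k hk1 h).2 hB ((hs1 k h).1 hks)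
      · constructor
        · rintro ⟨A, hA, hkA⟩
          exact (hx1 k h hk2).1 ⟨A, hF2 hA, hkA⟩
        · rintro ⟨B, hB, hkB⟩
          exact (hx1 k h hk2).2 ⟨B, hG2 hB, hkB⟩
  le_antisymm a b hab hba := by
    obtain ⟨hn1, hF1, hG1, hs1, -⟩ := hab
    obtain ⟨hn2, hF2, hG2, hs2, -⟩ := hba
    refine ext' ?_ (le_antisymm hn2 hn1) (le_antisymm hF2 hF1) (le_antisymm hG2 hG1)
    ext k
    constructor
    · intro h; exact (hs2 k (a.hs k h)).2 h
    · intro h; exact (hs1 k (b.hs k h)).2 h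

theorem le_iff {q p : Cond 𝒜 ℬ} : q ≤ p ↔ Le q p := Iff.rfl

end Cond

namespace Cond

open scoped Classical

variable {𝒜 ℬ : Set (Set ℕ)}

/-- Canonical extension: extend the bound to `max p.n m`, fill in members of sets in `p.F`
on the new interval, add the extra finite set `e`, and enlarge `F` and `G`. -/
noncomputable def ext1 (p : Cond 𝒜 ℬ) (m : ℕ) (e : Finset ℕ) (F' G' : Finset (Set ℕ))
    (he : ∀ k ∈ e, p.n ≤ k ∧ k < max p.n m ∧ ∀ B ∈ p.G, k ∉ B)
    (hF' : ↑F' ⊆ 𝒜) (hG' : ↑G' ⊆ ℬ)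
    (hFG' : ∀ k, (∃ A ∈ p.F ∪ F', k ∈ A) → (∃ B ∈ p.G ∪ G', k ∈ B) → k < max p.n m) :
    Cond 𝒜 ℬ where
  s := p.s ∪ (Finset.range (max p.n m)).filter (fun k => p.n ≤ k ∧ ∃ A ∈ p.F, k ∈ A) ∪ e
  n := max p.n m
  F := p.F ∪ F'
  G := p.G ∪ G'
  hs := by
    intro k hk
    simp only [Finset.mem_union, Finset.mem_filter, Finset.mem_range] at hk
    rcases hk with (hk | hk) | hk
    · exact (p.hs k hk).trans_le (le_max_left _ _)
    · exact hk.1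
    · exact (he k hk).2.1
  hF := by
    rw [Finset.coe_union]
    exact Set.union_subset p.hF hF'
  hG := by
    rw [Finset.coe_union]
    exact Set.union_subset p.hG hG'
  hFG := hFG'

theorem ext1_le (p : Cond 𝒜 ℬ) (m : ℕ) (e : Finset ℕ) (F' G' : Finset (Set ℕ))
    (he : ∀ k ∈ e, p.n ≤ k ∧ k < max p.n m ∧ ∀ B ∈ p.G, k ∉ B)
    (hF' : ↑F' ⊆ 𝒜) (hG' : ↑G' ⊆ ℬ)
    (hFG' : ∀ k, (∃ A ∈ p.F ∪ F', k ∈ A) → (∃ B ∈ p.G ∪ G', k ∈ B) → k < max p.n m) :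
    ext1 p m e F' G' he hF' hG' hFG' ≤ p := by
  refine ⟨le_max_left _ _, Finset.subset_union_left, Finset.subset_union_left, ?_, ?_⟩
  · intro k hk
    simp only [ext1, Finset.mem_union, Finset.mem_filter, Finset.mem_range]
    constructor
    · rintro ((h | h) | h)
      · exact h
      · exact absurd hk (not_lt.2 h.2.1)
      · exact absurd hk (not_lt.2 (he k h).1)
    · intro h; exact Or.inl (Or.inl h)
  · intro k hk1 hk2
    constructor
    · intro hA
      simp only [ext1, Finset.mem_union, Finset.mem_filter, Finset.mem_range]
      exact Or.inl (Or.inr ⟨hk2, hk1, hA⟩)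
    · rintro ⟨B, hB, hkB⟩ hks
      simp only [ext1, Finset.mem_union, Finset.mem_filter, Finset.mem_range] at hks
      rcases hks with (h | h) | h
      · exact absurd hk1 (not_le.2 (p.hs k h))
      · exact absurd hk1 (not_le.2 (p.hFG k h.2.2 ⟨B, hB, hkB⟩))
      · exact (he k h).2.2 B hB hkB

@[simp] theorem ext1_n (p : Cond 𝒜 ℬ) (m e F' G' he hF' hG' hFG') :
    (ext1 p m e F' G' he hF' hG' hFG').n = max p.n m := rfl

@[simp] theorem ext1_F (p : Cond 𝒜 ℬ) (m e F' G' he hF' hG' hFG') :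
    (ext1 p m e F' G' he hF' hG' hFG').F = p.F ∪ F' := rfl

@[simp] theorem ext1_G (p : Cond 𝒜 ℬ) (m e F' G' he hF' hG' hFG') :
    (ext1 p m e F' G' he hF' hG' hFG').G = p.G ∪ G' := rfl

theorem mem_ext1_s {p : Cond 𝒜 ℬ} {m e F' G' he hF' hG' hFG'} {k : ℕ} :
    k ∈ (ext1 p m e F' G' he hF' hG' hFG').s ↔
      k ∈ p.s ∨ (k < max p.n m ∧ p.n ≤ k ∧ ∃ A ∈ p.F, k ∈ A) ∨ k ∈ e := by
  simp only [ext1, Finset.mem_union, Finset.mem_filter, Finset.mem_range]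
  rw [or_assoc]

end Cond

namespace Cond

open scoped Classical

variable {𝒜 ℬ : Set (Set ℕ)}

theorem compat (hAB : ∀ A ∈ 𝒜, ∀ B ∈ ℬ, (A ∩ B).Finite)
    {p q : Cond 𝒜 ℬ} (hs : p.s = q.s) (hn : p.n = q.n) (hF : p.F = q.F) :
    ∃ r : Cond 𝒜 ℬ, r ≤ p ∧ r ≤ q := by
  have hT : (⋃ A ∈ (p.F : Set (Set ℕ)), ⋃ B ∈ (q.G : Set (Set ℕ)), A ∩ B).Finite := by
    apply Set.Finite.biUnion p.F.finite_toSet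
    intro A hA
    apply Set.Finite.biUnion q.G.finite_toSet
    intro B hB
    exact hAB A (p.hF hA) B (q.hG hB)
  obtain ⟨b, hb⟩ := hT.bddAbove
  have hFG' : ∀ k, (∃ A ∈ p.F ∪ (∅ : Finset (Set ℕ)), k ∈ A) →
      (∃ B ∈ p.G ∪ q.G, k ∈ B) → k < max p.n (b + 1) := by
    rintro k ⟨A, hA, hkA⟩ ⟨B, hB, hkB⟩
    rw [Finset.union_empty] at hA
    rw [Finset.mem_union] at hB
    rcases hB with hB | hB
    · exact lt_of_lt_of_le (p.hFG k ⟨A, hA, hkA⟩ ⟨B, hB, hkB⟩) (le_max_left _ _)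
    · refine lt_of_lt_of_le (Nat.lt_succ_of_le (hb ?_)) (le_max_right _ _)
      simp only [Set.mem_iUnion]
      exact ⟨A, hA, B, hB, hkA, hkB⟩
  have he : ∀ k ∈ (∅ : Finset ℕ), p.n ≤ k ∧ k < max p.n (b + 1) ∧ ∀ B ∈ p.G, k ∉ B := by
    simp
  refine ⟨ext1 p (b + 1) ∅ ∅ q.G he (by simp) q.hG hFG', ext1_le _ _ _ _ _ _ _ _ _, ?_⟩
  refine ⟨hn ▸ le_max_left _ _, ?_, ?_, ?_, ?_⟩
  · rw [ext1_F, ← hF]; exact Finset.subset_union_left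
  · rw [ext1_G]; exact Finset.subset_union_right
  · intro k hk
    rw [← hn] at hk
    rw [mem_ext1_s, ← hs]
    simp only [Finset.notMem_empty, or_false]
    constructor
    · rintro (h | h)
      · exact h
      · exact absurd hk (not_lt.2 h.2.1)
    · exact Or.inl
  · intro k hk1 hk2
    rw [← hn] at hk1
    rw [ext1_n] at hk2
    constructor
    · intro hA
      rw [mem_ext1_s]
      rw [← hF] at hA
      exact Or.inr (Or.inl ⟨hk2, hk1, hA⟩)
    · rintro ⟨B, hB, hkB⟩ hks
      rw [mem_ext1_s] at hks
      simp only [Finset.notMem_empty, or_false] at hks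
      rcases hks with h | h
      · exact absurd hk1 (not_le.2 (hn ▸ p.hs k h))
      · refine absurd hk1 (not_le.2 ?_)
        rw [hn]
        exact q.hFG k (hF ▸ h.2.2) ⟨B, hB, hkB⟩

instance : Nonempty (Cond 𝒜 ℬ) :=
  ⟨⟨∅, 0, ∅, ∅, by simp, by simp, by simp, by simp⟩⟩

theorem ccc (hAc : 𝒜.Countable) (hAB : ∀ A ∈ 𝒜, ∀ B ∈ ℬ, (A ∩ B).Finite) :
    IsCCC (Cond 𝒜 ℬ) := by
  intro X hX
  rw [← Set.countable_coe_iff]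
  have hcnt : Countable {F : Finset (Set ℕ) // ↑F ⊆ 𝒜} := by
    have h1 : {t : Set (Set ℕ) | t.Finite ∧ t ⊆ 𝒜}.Countable :=
      Set.countable_setOf_finite_subset hAc
    have h2 : {F : Finset (Set ℕ) | ↑F ⊆ 𝒜}.Countable := by
      have := h1.preimage (f := fun F : Finset (Set ℕ) => (↑F : Set (Set ℕ)))
        Finset.coe_injective
      refine this.mono ?_
      intro F hF
      exact ⟨F.finite_toSet, hF⟩
    exact h2.to_subtype
  haveI := hcnt
  let ψ : X → Finset ℕ × ℕ × {F : Finset (Set ℕ) // ↑F ⊆ 𝒜} :=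
    fun p => (p.1.s, p.1.n, (⟨p.1.F, p.1.hF⟩ : {F : Finset (Set ℕ) // ↑F ⊆ 𝒜}))
  have hinj : Function.Injective ψ := by
    rintro ⟨p, hp⟩ ⟨q, hq⟩ h
    simp only [ψ, Prod.mk.injEq, Subtype.mk.injEq] at h
    obtain ⟨h1, h2, h3⟩ := h
    by_contra hne
    have hpq : p ≠ q := fun h => hne (by simp [h])
    exact hX p hp q hq hpq (compat hAB h1 h2 h3)
  exact hinj.countable

end Cond

namespace Cond

open scoped Classical

variable {𝒜 ℬ : Set (Set ℕ)}

def D1 (m : ℕ) : Set (Cond 𝒜 ℬ) := {p | m < p.n}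
def D2 (A : Set ℕ) : Set (Cond 𝒜 ℬ) := {p | A ∈ p.F}
def D3 (B : Set ℕ) : Set (Cond 𝒜 ℬ) := {p | B ∈ p.G}
def D4 (C : Set ℕ) (m : ℕ) : Set (Cond 𝒜 ℬ) := {p | ∃ j, m ≤ j ∧ j ∈ C ∧ j ∈ p.s}
def D5 (C : Set ℕ) (m : ℕ) : Set (Cond 𝒜 ℬ) :=
  {p | ∃ j, m ≤ j ∧ j ∈ C ∧ j < p.n ∧ j ∉ p.s}

theorem he_triv (p : Cond 𝒜 ℬ) (m : ℕ) :
    ∀ k ∈ (∅ : Finset ℕ), p.n ≤ k ∧ k < max p.n m ∧ ∀ B ∈ p.G, k ∉ B := by simp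

theorem hFG_triv (p : Cond 𝒜 ℬ) (m : ℕ) :
    ∀ k, (∃ A ∈ p.F ∪ (∅ : Finset (Set ℕ)), k ∈ A) →
      (∃ B ∈ p.G ∪ (∅ : Finset (Set ℕ)), k ∈ B) → k < max p.n m := by
  simp only [Finset.union_empty]
  intro k h1 h2
  exact (p.hFG k h1 h2).trans_le (le_max_left _ _)

theorem D1_dense (m : ℕ) : DenseBelow (D1 m : Set (Cond 𝒜 ℬ)) := by
  intro p
  refine ⟨ext1 p (m + 1) ∅ ∅ ∅ (he_triv p _) (by simp) (by simp) (hFG_triv p _),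
    ?_, ext1_le _ _ _ _ _ _ _ _ _⟩
  simp only [D1, Set.mem_setOf_eq, ext1_n]
  exact lt_of_lt_of_le (Nat.lt_succ_self m) (le_max_right _ _)

theorem D2_dense {A : Set ℕ} (hA : A ∈ 𝒜)
    (hAB : ∀ A ∈ 𝒜, ∀ B ∈ ℬ, (A ∩ B).Finite) :
    DenseBelow (D2 A : Set (Cond 𝒜 ℬ)) := by
  intro p
  have hT : (⋃ B ∈ (p.G : Set (Set ℕ)), A ∩ B).Finite := by
    apply Set.Finite.biUnion p.G.finite_toSet
    intro B hB
    exact hAB A hA B (p.hG hB)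
  obtain ⟨b, hb⟩ := hT.bddAbove
  have hFG' : ∀ k, (∃ A' ∈ p.F ∪ {A}, k ∈ A') →
      (∃ B ∈ p.G ∪ (∅ : Finset (Set ℕ)), k ∈ B) → k < max p.n (b + 1) := by
    rintro k ⟨A', hA', hkA⟩ ⟨B, hB, hkB⟩
    rw [Finset.union_empty] at hB
    rw [Finset.mem_union, Finset.mem_singleton] at hA'
    rcases hA' with hA' | rfl
    · exact lt_of_lt_of_le (p.hFG k ⟨A', hA', hkA⟩ ⟨B, hB, hkB⟩) (le_max_left _ _)
    · refine lt_of_lt_of_le (Nat.lt_succ_of_le (hb ?_)) (le_max_right _ _)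
      simp only [Set.mem_iUnion]
      exact ⟨B, hB, hkA, hkB⟩
  refine ⟨ext1 p (b + 1) ∅ {A} ∅ (he_triv p _) (by simpa using hA) (by simp) hFG',
    ?_, ext1_le _ _ _ _ _ _ _ _ _⟩
  simp [D2]

theorem D3_dense {B : Set ℕ} (hB : B ∈ ℬ)
    (hAB : ∀ A ∈ 𝒜, ∀ B ∈ ℬ, (A ∩ B).Finite) :
    DenseBelow (D3 B : Set (Cond 𝒜 ℬ)) := by
  intro p
  have hT : (⋃ A ∈ (p.F : Set (Set ℕ)), A ∩ B).Finite := by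
    apply Set.Finite.biUnion p.F.finite_toSet
    intro A hA
    exact hAB A (p.hF hA) B hB
  obtain ⟨b, hb⟩ := hT.bddAbove
  have hFG' : ∀ k, (∃ A ∈ p.F ∪ (∅ : Finset (Set ℕ)), k ∈ A) →
      (∃ B' ∈ p.G ∪ {B}, k ∈ B') → k < max p.n (b + 1) := by
    rintro k ⟨A, hA, hkA⟩ ⟨B', hB', hkB⟩
    rw [Finset.union_empty] at hA
    rw [Finset.mem_union, Finset.mem_singleton] at hB'
    rcases hB' with hB' | rfl
    · exact lt_of_lt_of_le (p.hFG k ⟨A, hA, hkA⟩ ⟨B', hB', hkB⟩) (le_max_left _ _)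
    · refine lt_of_lt_of_le (Nat.lt_succ_of_le (hb ?_)) (le_max_right _ _)
      simp only [Set.mem_iUnion]
      exact ⟨A, hA, hkA, hkB⟩
  refine ⟨ext1 p (b + 1) ∅ ∅ {B} (he_triv p _) (by simp) (by simpa using hB) hFG',
    ?_, ext1_le _ _ _ _ _ _ _ _ _⟩
  simp [D3]

theorem D4_dense {𝒞 : Set (Set ℕ)} {C : Set ℕ} (hC : C ∈ 𝒞) (m : ℕ)
    (hCB : ∀ C ∈ 𝒞, ∀ t : Finset (Set ℕ), ↑t ⊆ ℬ → ¬(C \ ⋃₀ (↑t : Set (Set ℕ))).Finite) :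
    DenseBelow (D4 C m : Set (Cond 𝒜 ℬ)) := by
  intro p
  have hinf : (C \ ⋃₀ (↑p.G : Set (Set ℕ))).Infinite := hCB C hC p.G p.hG
  obtain ⟨j, hjmem, hj⟩ := hinf.exists_gt (max m p.n)
  obtain ⟨hjC, hjG⟩ := hjmem
  have hjm : m ≤ j := le_of_lt (lt_of_le_of_lt (le_max_left _ _) hj)
  have hjn : p.n ≤ j := le_of_lt (lt_of_le_of_lt (le_max_right _ _) hj)
  have he : ∀ k ∈ ({j} : Finset ℕ), p.n ≤ k ∧ k < max p.n (j + 1) ∧ ∀ B ∈ p.G, k ∉ B := by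
    intro k hk
    rw [Finset.mem_singleton] at hk
    rw [hk]
    refine ⟨hjn, lt_of_lt_of_le (Nat.lt_succ_self j) (le_max_right _ _), ?_⟩
    intro B hB hkB
    exact hjG ⟨B, hB, hkB⟩
  refine ⟨ext1 p (j + 1) {j} ∅ ∅ he (by simp) (by simp) (hFG_triv p _),
    ?_, ext1_le _ _ _ _ _ _ _ _ _⟩
  refine ⟨j, hjm, hjC, ?_⟩
  rw [mem_ext1_s]
  simp

theorem D5_dense {𝒞 : Set (Set ℕ)} {C : Set ℕ} (hC : C ∈ 𝒞) (m : ℕ)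
    (hCA : ∀ C ∈ 𝒞, ∀ t : Finset (Set ℕ), ↑t ⊆ 𝒜 → ¬(C \ ⋃₀ (↑t : Set (Set ℕ))).Finite) :
    DenseBelow (D5 C m : Set (Cond 𝒜 ℬ)) := by
  intro p
  have hinf : (C \ ⋃₀ (↑p.F : Set (Set ℕ))).Infinite := hCA C hC p.F p.hF
  obtain ⟨j, hjmem, hj⟩ := hinf.exists_gt (max m p.n)
  obtain ⟨hjC, hjF⟩ := hjmem
  have hjm : m ≤ j := le_of_lt (lt_of_le_of_lt (le_max_left _ _) hj)
  have hjn : p.n ≤ j := le_of_lt (lt_of_le_of_lt (le_max_right _ _) hj)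
  refine ⟨ext1 p (j + 1) ∅ ∅ ∅ (he_triv p _) (by simp) (by simp) (hFG_triv p _),
    ?_, ext1_le _ _ _ _ _ _ _ _ _⟩
  refine ⟨j, hjm, hjC, ?_, ?_⟩
  · rw [ext1_n]
    exact lt_of_lt_of_le (Nat.lt_succ_self j) (le_max_right _ _)
  · rw [mem_ext1_s]
    push_neg
    refine ⟨fun hjs => absurd (p.hs j hjs) (not_lt.2 hjn), ?_, by simp⟩
    intro _ _ A hA hjA
    exact hjF ⟨A, hA, hjA⟩
end Cond

/-- The combinatorial lemma: under `MA + ¬CH`, given a countable family `𝒜`, and families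
`ℬ, 𝒞` of size less than continuum with the stated almost-disjointness conditions, there
is a set `S` almost containing every member of `𝒜`, almost disjoint from every member of
`ℬ`, and splitting every member of `𝒞`. -/
theorem statement7 (ma : MartinsAxiom) (nch : Cardinal.aleph 1 < Cardinal.continuum)
    (𝒜 ℬ 𝒞 : Set (Set ℕ))
    (hA : #𝒜 ≤ Cardinal.aleph0) (hB : #ℬ < Cardinal.continuum)
    (hC : #𝒞 < Cardinal.continuum)
    (hAB : ∀ A ∈ 𝒜, ∀ B ∈ ℬ, (A ∩ B).Finite)
    (hCA : ∀ C ∈ 𝒞, ∀ t : Finset (Set ℕ), ↑t ⊆ 𝒜 → ¬(C \ ⋃₀ (↑t : Set (Set ℕ))).Finite)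
    (hCB : ∀ C ∈ 𝒞, ∀ t : Finset (Set ℕ), ↑t ⊆ ℬ → ¬(C \ ⋃₀ (↑t : Set (Set ℕ))).Finite) :
    ∃ S : Set ℕ, (∀ A ∈ 𝒜, (A \ S).Finite) ∧ (∀ B ∈ ℬ, (B ∩ S).Finite) ∧
      ∀ C ∈ 𝒞, (C ∩ S).Infinite ∧ (C \ S).Infinite := by
  classical
  have hAc : 𝒜.Countable := Set.countable_coe_iff.mp (Cardinal.mk_le_aleph0_iff.mp hA)
  -- the family of dense sets
  set R1 : Set (Set (Cond 𝒜 ℬ)) := Set.range (fun m : ℕ => Cond.D1 m) with hR1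
  set R2 : Set (Set (Cond 𝒜 ℬ)) := Set.range (fun A : ↥𝒜 => Cond.D2 ↑A) with hR2
  set R3 : Set (Set (Cond 𝒜 ℬ)) := Set.range (fun B : ↥ℬ => Cond.D3 ↑B) with hR3
  set R4 : Set (Set (Cond 𝒜 ℬ)) :=
    Set.range (fun x : ↥𝒞 × ℕ => Cond.D4 ↑x.1 x.2) with hR4
  set R5 : Set (Set (Cond 𝒜 ℬ)) :=
    Set.range (fun x : ↥𝒞 × ℕ => Cond.D5 ↑x.1 x.2) with hR5
  set 𝒟 : Set (Set (Cond 𝒜 ℬ)) := R1 ∪ R2 ∪ R3 ∪ R4 ∪ R5 with h𝒟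
  have hdense : ∀ D ∈ 𝒟, DenseBelow D := by
    intro D hD
    rcases hD with (((⟨m, rfl⟩ | ⟨A, rfl⟩) | ⟨B, rfl⟩) | ⟨x, rfl⟩) | ⟨x, rfl⟩
    · exact Cond.D1_dense m
    · exact Cond.D2_dense A.2 hAB
    · exact Cond.D3_dense B.2 hAB
    · exact Cond.D4_dense x.1.2 x.2 hCB
    · exact Cond.D5_dense x.1.2 x.2 hCA
  have hcard : #𝒟 < Cardinal.continuum := by
    have c1 : #R1 < Cardinal.continuum :=
      (Cardinal.mk_range_le).trans_lt
        (by rw [Cardinal.mk_nat]; exact Cardinal.aleph0_lt_continuum)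
    have c2 : #R2 < Cardinal.continuum :=
      (Cardinal.mk_range_le).trans_lt (hA.trans_lt Cardinal.aleph0_lt_continuum)
    have c3 : #R3 < Cardinal.continuum := (Cardinal.mk_range_le).trans_lt hB
    have cprod : #(↥𝒞 × ℕ) < Cardinal.continuum := by
      rw [Cardinal.mk_prod, Cardinal.lift_id, Cardinal.lift_id, Cardinal.mk_nat]
      exact Cardinal.mul_lt_of_lt Cardinal.aleph0_le_continuum hC
        Cardinal.aleph0_lt_continuum
    have c4 : #R4 < Cardinal.continuum := (Cardinal.mk_range_le).trans_lt cprod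
    have c5 : #R5 < Cardinal.continuum := (Cardinal.mk_range_le).trans_lt cprod
    rw [h𝒟]
    refine lt_of_le_of_lt (Cardinal.mk_union_le _ _)
      (Cardinal.add_lt_of_lt Cardinal.aleph0_le_continuum ?_ c5)
    refine lt_of_le_of_lt (Cardinal.mk_union_le _ _)
      (Cardinal.add_lt_of_lt Cardinal.aleph0_le_continuum ?_ c4)
    refine lt_of_le_of_lt (Cardinal.mk_union_le _ _)
      (Cardinal.add_lt_of_lt Cardinal.aleph0_le_continuum ?_ c3)
    exact lt_of_le_of_lt (Cardinal.mk_union_le _ _)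
      (Cardinal.add_lt_of_lt Cardinal.aleph0_le_continuum c1 c2)
  obtain ⟨G, ⟨hGne, hGup, hGdir⟩, hGmeet⟩ :=
    ma (Cond 𝒜 ℬ) (Cond.ccc hAc hAB) 𝒟 hdense hcard
  -- membership of each dense set in 𝒟
  have m1 : ∀ m : ℕ, Cond.D1 m ∈ 𝒟 := fun m =>
    Set.mem_union_left _ (Set.mem_union_left _ (Set.mem_union_left _
      (Set.mem_union_left _ ⟨m, rfl⟩)))
  have m2 : ∀ A ∈ 𝒜, Cond.D2 (𝒜 := 𝒜) (ℬ := ℬ) A ∈ 𝒟 := fun A hA' =>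
    Set.mem_union_left _ (Set.mem_union_left _ (Set.mem_union_left _
      (Set.mem_union_right _ ⟨⟨A, hA'⟩, rfl⟩)))
  have m3 : ∀ B ∈ ℬ, Cond.D3 (𝒜 := 𝒜) (ℬ := ℬ) B ∈ 𝒟 := fun B hB' =>
    Set.mem_union_left _ (Set.mem_union_left _ (Set.mem_union_right _ ⟨⟨B, hB'⟩, rfl⟩))
  have m4 : ∀ C ∈ 𝒞, ∀ m : ℕ, Cond.D4 (𝒜 := 𝒜) (ℬ := ℬ) C m ∈ 𝒟 := fun C hC' m =>
    Set.mem_union_left _ (Set.mem_union_right _ ⟨(⟨C, hC'⟩, m), rfl⟩)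
  have m5 : ∀ C ∈ 𝒞, ∀ m : ℕ, Cond.D5 (𝒜 := 𝒜) (ℬ := ℬ) C m ∈ 𝒟 := fun C hC' m =>
    Set.mem_union_right _ ⟨(⟨C, hC'⟩, m), rfl⟩
  set S : Set ℕ := {k | ∃ p ∈ G, k ∈ p.s} with hS
  -- determination of membership by conditions in the filter
  have hdet : ∀ p ∈ G, ∀ k, k < p.n → (k ∈ S ↔ k ∈ p.s) := by
    intro p hp k hk
    constructor
    · rintro ⟨q, hqG, hkq⟩
      obtain ⟨r, hrG, hrp, hrq⟩ := hGdir p hp q hqG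
      have hkr : k ∈ r.s := (hrq.2.2.2.1 k (q.hs k hkq)).2 hkq
      exact (hrp.2.2.2.1 k hk).1 hkr
    · intro h
      exact ⟨p, hp, h⟩
  refine ⟨S, ?_, ?_, ?_⟩
  · -- A ⊆* S
    intro A hA'
    obtain ⟨p, hpG, hpD⟩ := hGmeet _ (m2 A hA')
    refine (Set.finite_Iio p.n).subset ?_
    intro k ⟨hkA, hkS⟩
    by_contra hlt
    rw [Set.mem_Iio, not_lt] at hlt
    obtain ⟨q, hqG, hqD⟩ := hGmeet _ (m1 k)
    obtain ⟨r, hrG, hrp, hrq⟩ := hGdir p hpG q hqG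
    have hkrn : k < r.n := lt_of_lt_of_le hqD hrq.1
    have hkr : k ∈ r.s := (hrp.2.2.2.2 k hlt hkrn).1 ⟨A, hpD, hkA⟩
    exact hkS ⟨r, hrG, hkr⟩
  · -- B ∩ S finite
    intro B hB'
    obtain ⟨p, hpG, hpD⟩ := hGmeet _ (m3 B hB')
    refine (Set.finite_Iio p.n).subset ?_
    intro k ⟨hkB, hkS⟩
    by_contra hlt
    rw [Set.mem_Iio, not_lt] at hlt
    obtain ⟨q, hqG, hkq⟩ := hkS
    obtain ⟨r, hrG, hrp, hrq⟩ := hGdir p hpG q hqG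
    have hkqn : k < q.n := q.hs k hkq
    have hkr : k ∈ r.s := (hrq.2.2.2.1 k hkqn).2 hkq
    exact (hrp.2.2.2.2 k hlt (lt_of_lt_of_le hkqn hrq.1)).2 ⟨B, hpD, hkB⟩ hkr
  · -- splitting
    intro C hC'
    constructor
    · apply Set.infinite_of_forall_exists_gt
      intro a
      obtain ⟨p, hpG, j, hja, hjC, hjs⟩ := hGmeet _ (m4 C hC' (a + 1))
      exact ⟨j, ⟨hjC, p, hpG, hjs⟩, hja⟩
    · apply Set.infinite_of_forall_exists_gt
      intro a
      obtain ⟨p, hpG, j, hja, hjC, hjn, hjs⟩ := hGmeet _ (m5 C hC' (a + 1))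
      refine ⟨j, ⟨hjC, fun hjS => hjs ((hdet p hpG j hjn).1 hjS)⟩, hja⟩
end

section
/- Let 𝒜 and ℬ be families of subsets of ℕ with 𝒜 countable. Let ℙ be the partially ordered set whose elements are pairs (P,Q) of disjoint subsets of ℕ such that P =* A₁ ∪ … ∪ Aₙ for some n ≥ 0 and A₁, …, Aₙ ∈ 𝒜, and Q =* B₁ ∪ … ∪ Bₘ for some m ≥ 0 and B₁, …, Bₘ ∈ ℬ (empty unions, equal to ∅, are allowed), ordered by (P,Q) ≤ (P',Q') if and only if P ⊇ P' and Q ⊇ Q'. Then any two elements (P,Q) and (P',Q') of ℙ with P = P' are compatible (have a common lower bound in ℙ), and consequently ℙ satisfies the countable chain condition: every set of pairwise incompatible elements of ℙ is countable. -/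
open Cardinal Set Filter Topology

/-- The condition defining the forcing poset `ℙ`: pairs `(P, Q)` of disjoint subsets of
`ℕ` with `P` almost equal to a finite union of members of `𝒜` and `Q` almost equal to a
finite union of members of `ℬ`. -/
def PPmem (𝒜 ℬ : Set (Set ℕ)) (x : Set ℕ × Set ℕ) : Prop :=
  Disjoint x.1 x.2 ∧
    (∃ t : Finset (Set ℕ), ↑t ⊆ 𝒜 ∧ (symmDiff x.1 (⋃₀ (↑t : Set (Set ℕ)))).Finite) ∧
    ∃ t : Finset (Set ℕ), ↑t ⊆ ℬ ∧ (symmDiff x.2 (⋃₀ (↑t : Set (Set ℕ)))).Finite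

/-- The order on `ℙ`: reverse extension in both coordinates. -/
def PPle (x y : Set ℕ × Set ℕ) : Prop :=
  y.1 ⊆ x.1 ∧ y.2 ⊆ x.2

lemma firstCoord_countable (𝒜 : Set (Set ℕ)) (h𝒜 : 𝒜.Countable) :
    {P : Set ℕ | ∃ t : Finset (Set ℕ), ↑t ⊆ 𝒜 ∧
      (symmDiff P (⋃₀ (↑t : Set (Set ℕ)))).Finite}.Countable := by
  have h1 : {u : Set (Set ℕ) | u.Finite ∧ u ⊆ 𝒜}.Countable :=
    countable_setOf_finite_subset h𝒜
  have h2 : {F : Set ℕ | F.Finite}.Countable := Countable.setOf_finite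
  have h3 := (h1.prod h2).image (fun p : Set (Set ℕ) × Set ℕ => symmDiff (⋃₀ p.1) p.2)
  refine h3.mono ?_
  rintro P ⟨t, ht, hfin⟩
  refine ⟨(↑t, symmDiff P (⋃₀ (↑t : Set (Set ℕ)))), ⟨⟨t.finite_toSet, ht⟩, hfin⟩, ?_⟩
  show symmDiff (⋃₀ (↑t : Set (Set ℕ))) (symmDiff P (⋃₀ (↑t : Set (Set ℕ)))) = P
  rw [symmDiff_comm P, symmDiff_symmDiff_cancel_left]

/-- If `𝒜` is countable then any two conditions of `ℙ` with the same first coordinate are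
compatible, and consequently `ℙ` satisfies the countable chain condition. -/
theorem statement9 (𝒜 ℬ : Set (Set ℕ)) (h𝒜 : 𝒜.Countable) :
    (∀ x y : Set ℕ × Set ℕ, PPmem 𝒜 ℬ x → PPmem 𝒜 ℬ y → x.1 = y.1 →
      ∃ z : Set ℕ × Set ℕ, PPmem 𝒜 ℬ z ∧ PPle z x ∧ PPle z y) ∧
    ∀ S : Set {x : Set ℕ × Set ℕ // PPmem 𝒜 ℬ x},
      (∀ p ∈ S, ∀ q ∈ S, p ≠ q →
        ¬∃ r : {x : Set ℕ × Set ℕ // PPmem 𝒜 ℬ x}, PPle ↑r ↑p ∧ PPle ↑r ↑q) →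
      S.Countable := by
  have compat : ∀ x y : Set ℕ × Set ℕ, PPmem 𝒜 ℬ x → PPmem 𝒜 ℬ y → x.1 = y.1 →
      ∃ z : Set ℕ × Set ℕ, PPmem 𝒜 ℬ z ∧ PPle z x ∧ PPle z y := by
    classical
    rintro ⟨P, Q⟩ ⟨P', Q'⟩ ⟨hd, hA, tQ, htQ, hfQ⟩ ⟨hd', hA', tQ', htQ', hfQ'⟩ h
    simp only at h
    subst h
    refine ⟨(P, Q ∪ Q'), ⟨?_, hA, ⟨tQ ∪ tQ', ?_, ?_⟩⟩,
      ⟨subset_rfl, subset_union_left⟩, ⟨subset_rfl, subset_union_right⟩⟩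
    · exact disjoint_union_right.mpr ⟨hd, hd'⟩
    · push_cast
      exact union_subset htQ htQ'
    · refine (hfQ.union hfQ').subset ?_
      intro n hn
      simp only [Set.mem_symmDiff, Finset.coe_union, Set.sUnion_union,
        Set.mem_union] at hn ⊢
      tauto
  refine ⟨compat, fun S hS => ?_⟩
  have hinj : Set.InjOn (fun p : {x : Set ℕ × Set ℕ // PPmem 𝒜 ℬ x} => p.val.1) S := by
    intro p hp q hq hpq
    by_contra hne
    obtain ⟨z, hz, hzp, hzq⟩ := compat p.val q.val p.2 q.2 hpq
    exact hS p hp q hq hne ⟨⟨z, hz⟩, hzp, hzq⟩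
  have hmaps : Set.MapsTo (fun p : {x : Set ℕ × Set ℕ // PPmem 𝒜 ℬ x} => p.val.1) S
      {P : Set ℕ | ∃ t : Finset (Set ℕ), ↑t ⊆ 𝒜 ∧
        (symmDiff P (⋃₀ (↑t : Set (Set ℕ)))).Finite} := fun p _ => p.2.2.1
  exact hmaps.countable_of_injOn hinj (firstCoord_countable 𝒜 h𝒜)
end

section
/- Assume Martin's Axiom and ¬CH. Let B be a Boolean algebra, A a Boolean subalgebra of B with |A| < 𝔠, and b ∈ B an element such that the set {a ∈ A : a ≤ b} is countable. Then every injective Boolean algebra homomorphism ψ : A → P(ω)/Fin extends to an injective Boolean algebra homomorphism from the Boolean subalgebra of B generated by A ∪ {b} into P(ω)/Fin. -/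
open Cardinal Set Filter Topology

/-- `P(ω)/Fin`: subsets of `ℕ` (as predicates) modulo the ideal of finite sets,
realized as germs of `Prop`-valued sequences along the cofinite filter. -/
abbrev PomegaFin : Type := Filter.Germ (Filter.cofinite : Filter ℕ) Prop

noncomputable instance : BooleanAlgebra PomegaFin where
  compl := Filter.Germ.map (·ᶜ)
  inf_compl_le_bot a := a.inductionOn fun f => by
    change ((↑f : PomegaFin) ⊓ Filter.Germ.map _ _ : PomegaFin) ≤ (↑(⊥ : ℕ → Prop) : PomegaFin)
    rw [Filter.Germ.map_coe]
    refine Filter.Eventually.of_forall fun x => ?_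
    simp [compl]
  top_le_sup_compl a := a.inductionOn fun f => by
    change (↑(⊤ : ℕ → Prop) : PomegaFin) ≤ ((↑f : PomegaFin) ⊔ Filter.Germ.map _ _ : PomegaFin)
    rw [Filter.Germ.map_coe]
    refine Filter.Eventually.of_forall fun x => ?_
    by_cases h : f x <;> simp [compl, h]
  le_top a := le_top
  bot_le a := bot_le
/-- A subset of a Boolean algebra closed under the Boolean operations. -/
def IsBoolSubalgebra {B : Type*} [BooleanAlgebra B] (S : Set B) : Prop :=
  ⊥ ∈ S ∧ ⊤ ∈ S ∧ (∀ a ∈ S, ∀ b ∈ S, a ⊔ b ∈ S) ∧ (∀ a ∈ S, ∀ b ∈ S, a ⊓ b ∈ S) ∧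
    ∀ a ∈ S, aᶜ ∈ S

/-- The smallest Boolean subalgebra containing `X`. -/
def boolGen {B : Type*} [BooleanAlgebra B] (X : Set B) : Set B :=
  ⋂₀ {S : Set B | IsBoolSubalgebra S ∧ X ⊆ S}
/-- `f` is a Boolean algebra homomorphism on the subset `S`. -/
def IsBAHomOn {B T : Type*} [BooleanAlgebra B] [BooleanAlgebra T] (S : Set B) (f : B → T) :
    Prop :=
  f ⊥ = ⊥ ∧ f ⊤ = ⊤ ∧ (∀ a ∈ S, ∀ b ∈ S, f (a ⊔ b) = f a ⊔ f b) ∧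
    (∀ a ∈ S, ∀ b ∈ S, f (a ⊓ b) = f a ⊓ f b) ∧ ∀ a ∈ S, f aᶜ = (f a)ᶜ

/-! Every element of the subalgebra generated by `A ∪ {b}` has the form
`(a₁ ⊓ b) ⊔ (a₂ ⊓ bᶜ)` with `a₁, a₂ ∈ A`, so `ψ` extends injectively by sending `b` to any
`c` such that, for `a ∈ A`, `a ⊓ b = ⊥ ↔ ψ a ⊓ c = ⊥` and `a ⊓ bᶜ = ⊥ ↔ ψ a ⊓ cᶜ = ⊥`.
With representatives `S a ⊆ ℕ` of `ψ a`, a suitable `c = [C]` must almost contain the sets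
`S g` of the countably many `g ≤ b` in `A`, be almost contained in the fewer than `𝔠` sets
`S u` with `b ≤ u`, and leave `S a ∩ C` (resp. `S a \ C`) infinite whenever `a ⊓ b`
(resp. `a ⊓ bᶜ`) is nonzero. Martin's axiom produces such a `C` from the poset of finite
approximations of `C` carrying finitely many of the promises `S g ⊆* C` and `C ⊆* S u`. -/

section Glue

variable {β : Type*} [BooleanAlgebra β] {b x y x' y' z : β}

def glue (b x y : β) : β := x ⊓ b ⊔ y ⊓ bᶜ

lemma glue_inf : glue b x y ⊓ b = x ⊓ b := by
  simp [glue, inf_sup_right, inf_assoc]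

lemma glue_inf_compl : glue b x y ⊓ bᶜ = y ⊓ bᶜ := by
  simp [glue, inf_sup_right, inf_assoc]

lemma glue_self : glue b x x = x := sup_inf_inf_compl

lemma glue_top_bot : glue b ⊤ ⊥ = b := by simp [glue]

lemma eq_glue_iff : z = glue b x y ↔ z ⊓ b = x ⊓ b ∧ z ⊓ bᶜ = y ⊓ bᶜ := by
  constructor
  · rintro rfl
    exact ⟨glue_inf, glue_inf_compl⟩
  · rintro ⟨hx, hy⟩
    rw [← glue_self (b := b) (x := z), glue, glue, hx, hy]

lemma glue_eq_glue_iff : glue b x y = glue b x' y' ↔ x ⊓ b = x' ⊓ b ∧ y ⊓ bᶜ = y' ⊓ bᶜ := by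
  rw [eq_glue_iff, glue_inf, glue_inf_compl]

lemma glue_sup_glue : glue b x y ⊔ glue b x' y' = glue b (x ⊔ x') (y ⊔ y') := by
  rw [eq_glue_iff]
  constructor
  · rw [inf_sup_right, glue_inf, glue_inf, ← inf_sup_right]
  · rw [inf_sup_right, glue_inf_compl, glue_inf_compl, ← inf_sup_right]

lemma glue_inf_glue : glue b x y ⊓ glue b x' y' = glue b (x ⊓ x') (y ⊓ y') := by
  rw [eq_glue_iff]
  constructor
  · rw [inf_inf_distrib_right, glue_inf, glue_inf, ← inf_inf_distrib_right]
  · rw [inf_inf_distrib_right, glue_inf_compl, glue_inf_compl, ← inf_inf_distrib_right]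

lemma compl_glue : (glue b x y)ᶜ = glue b xᶜ yᶜ := by
  refine (IsCompl.of_eq ?_ ?_).compl_eq
  · rw [glue_inf_glue, inf_compl_eq_bot, inf_compl_eq_bot, glue_self]
  · rw [glue_sup_glue, sup_compl_eq_top, sup_compl_eq_top, glue_self]

lemma inf_le_inf_right_iff_eq_bot {a a' : β} : a ⊓ x ≤ a' ⊓ x ↔ a ⊓ a'ᶜ ⊓ x = ⊥ := by
  rw [le_inf_iff, and_iff_left inf_le_right, inf_right_comm, ← disjoint_iff,
    disjoint_compl_right_iff]

end Glue

section Subalgebra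

variable {β : Type*} [BooleanAlgebra β] {A : Set β}

lemma IsBoolSubalgebra.image2_glue (hA : IsBoolSubalgebra A) (b : β) :
    IsBoolSubalgebra (image2 (glue b) A A) := by
  obtain ⟨bot_mem, top_mem, sup_mem, inf_mem, compl_mem⟩ := hA
  refine ⟨⟨⊥, bot_mem, ⊥, bot_mem, glue_self⟩, ⟨⊤, top_mem, ⊤, top_mem, glue_self⟩, ?_, ?_, ?_⟩
  · rintro _ ⟨x, hx, y, hy, rfl⟩ _ ⟨x', hx', y', hy', rfl⟩
    exact ⟨_, sup_mem x hx x' hx', _, sup_mem y hy y' hy', glue_sup_glue.symm⟩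
  · rintro _ ⟨x, hx, y, hy, rfl⟩ _ ⟨x', hx', y', hy', rfl⟩
    exact ⟨_, inf_mem x hx x' hx', _, inf_mem y hy y' hy', glue_inf_glue.symm⟩
  · rintro _ ⟨x, hx, y, hy, rfl⟩
    exact ⟨_, compl_mem x hx, _, compl_mem y hy, compl_glue.symm⟩

lemma boolGen_union_singleton_subset (hA : IsBoolSubalgebra A) (b : β) :
    boolGen (A ∪ {b}) ⊆ image2 (glue b) A A := by
  refine sInter_subset_of_mem ⟨hA.image2_glue b, union_subset ?_ ?_⟩
  · exact fun a ha => ⟨a, ha, a, ha, glue_self⟩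
  · exact singleton_subset_iff.2 ⟨⊤, hA.2.1, ⊥, hA.1, glue_top_bot⟩

end Subalgebra

section Extension

variable {B T : Type*} [BooleanAlgebra B] [BooleanAlgebra T] {A : Set B} {ψ : B → T}

lemma IsBAHomOn.mono {S S' : Set B} {f : B → T} (hf : IsBAHomOn S f) (h : S' ⊆ S) :
    IsBAHomOn S' f :=
  ⟨hf.1, hf.2.1, fun a ha a' ha' => hf.2.2.1 a (h ha) a' (h ha'),
    fun a ha a' ha' => hf.2.2.2.1 a (h ha) a' (h ha'), fun a ha => hf.2.2.2.2 a (h ha)⟩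

lemma inf_le_inf_iff_of_eq_bot_iff (hA : IsBoolSubalgebra A) (hψ : IsBAHomOn A ψ) {x : B} {y : T}
    (h : ∀ a ∈ A, a ⊓ x = ⊥ ↔ ψ a ⊓ y = ⊥) {a a' : B} (ha : a ∈ A) (ha' : a' ∈ A) :
    a ⊓ x ≤ a' ⊓ x ↔ ψ a ⊓ y ≤ ψ a' ⊓ y := by
  have hc : a'ᶜ ∈ A := hA.2.2.2.2 a' ha'
  rw [inf_le_inf_right_iff_eq_bot, inf_le_inf_right_iff_eq_bot, h _ (hA.2.2.2.1 a ha _ hc),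
    hψ.2.2.2.1 a ha _ hc, hψ.2.2.2.2 a' ha']

lemma inf_eq_inf_iff_of_eq_bot_iff (hA : IsBoolSubalgebra A) (hψ : IsBAHomOn A ψ) {x : B} {y : T}
    (h : ∀ a ∈ A, a ⊓ x = ⊥ ↔ ψ a ⊓ y = ⊥) {a a' : B} (ha : a ∈ A) (ha' : a' ∈ A) :
    a ⊓ x = a' ⊓ x ↔ ψ a ⊓ y = ψ a' ⊓ y := by
  simp only [le_antisymm_iff, inf_le_inf_iff_of_eq_bot_iff hA hψ h ha ha',
    inf_le_inf_iff_of_eq_bot_iff hA hψ h ha' ha]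

lemma isBAHomOn_image2_glue (hA : IsBoolSubalgebra A) (hψ : IsBAHomOn A ψ) {b : B} {c : T}
    {φ : B → T} (hφ : ∀ x ∈ A, ∀ y ∈ A, φ (glue b x y) = glue c (ψ x) (ψ y)) :
    IsBAHomOn (image2 (glue b) A A) φ := by
  obtain ⟨bot_mem, top_mem, sup_mem, inf_mem, compl_mem⟩ := hA
  obtain ⟨map_bot, map_top, map_sup, map_inf, map_compl⟩ := hψ
  refine ⟨?_, ?_, ?_, ?_, ?_⟩
  · rw [← glue_self (b := b) (x := ⊥), hφ ⊥ bot_mem ⊥ bot_mem, map_bot, glue_self]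
  · rw [← glue_self (b := b) (x := ⊤), hφ ⊤ top_mem ⊤ top_mem, map_top, glue_self]
  · rintro _ ⟨x, hx, y, hy, rfl⟩ _ ⟨x', hx', y', hy', rfl⟩
    rw [glue_sup_glue, hφ _ (sup_mem x hx x' hx') _ (sup_mem y hy y' hy'), hφ x hx y hy,
      hφ x' hx' y' hy', map_sup x hx x' hx', map_sup y hy y' hy', glue_sup_glue]
  · rintro _ ⟨x, hx, y, hy, rfl⟩ _ ⟨x', hx', y', hy', rfl⟩
    rw [glue_inf_glue, hφ _ (inf_mem x hx x' hx') _ (inf_mem y hy y' hy'), hφ x hx y hy,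
      hφ x' hx' y' hy', map_inf x hx x' hx', map_inf y hy y' hy', glue_inf_glue]
  · rintro _ ⟨x, hx, y, hy, rfl⟩
    rw [compl_glue, hφ _ (compl_mem x hx) _ (compl_mem y hy), hφ x hx y hy, map_compl x hx,
      map_compl y hy, compl_glue]

/-- The extension sends `b` to `c`. -/
theorem exists_extension_of_eq_bot_iff (hA : IsBoolSubalgebra A) (hψ : IsBAHomOn A ψ) {b : B}
    {c : T} (hb : ∀ a ∈ A, a ⊓ b = ⊥ ↔ ψ a ⊓ c = ⊥) (hbc : ∀ a ∈ A, a ⊓ bᶜ = ⊥ ↔ ψ a ⊓ cᶜ = ⊥) :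
    ∃ φ : B → T, IsBAHomOn (boolGen (A ∪ {b})) φ ∧ InjOn φ (boolGen (A ∪ {b})) ∧
      EqOn φ ψ A := by
  let f : A × A → B := fun p => glue b p.1 p.2
  let g : A × A → T := fun p => glue c (ψ p.1) (ψ p.2)
  have hfg : ∀ p q : A × A, g p = g q ↔ f p = f q := fun p q => by
    simp only [f, g, glue_eq_glue_iff, inf_eq_inf_iff_of_eq_bot_iff hA hψ hb p.1.2 q.1.2,
      inf_eq_inf_iff_of_eq_bot_iff hA hψ hbc p.2.2 q.2.2]
  have hφ : ∀ x ∈ A, ∀ y ∈ A, Function.extend f g ψ (glue b x y) = glue c (ψ x) (ψ y) :=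
    fun x hx y hy => Function.FactorsThrough.extend_apply (fun p q h => (hfg p q).2 h) ψ
      (⟨x, hx⟩, ⟨y, hy⟩)
  have hsub := boolGen_union_singleton_subset hA b
  refine ⟨_, (isBAHomOn_image2_glue hA hψ hφ).mono hsub, InjOn.mono hsub ?_, fun a ha => ?_⟩
  · rintro _ ⟨x, hx, y, hy, rfl⟩ _ ⟨x', hx', y', hy', rfl⟩ h
    rw [hφ x hx y hy, hφ x' hx' y' hy'] at h
    exact (hfg (⟨x, hx⟩, ⟨y, hy⟩) (⟨x', hx'⟩, ⟨y', hy'⟩)).1 h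
  · simpa only [glue_self] using hφ a ha a ha

end Extension

namespace Interpolation

variable {ι : Type}

/-- A condition decides `C ∩ [0, n)` to be `s`, and promises that beyond `n` the set `C`
stays inside `S u` for `u ∈ F` and contains `S g` for `g ∈ G`; `sep` keeps these promises
consistent. -/
@[ext]
structure Condition (S : ι → Set ℕ) (L U : Set ι) where
  s : Finset ℕ
  n : ℕ
  F : Finset ι
  G : Finset ι
  s_lt : ∀ m ∈ s, m < n
  F_subset : ↑F ⊆ U
  G_subset : ↑G ⊆ L
  sep : ∀ g ∈ G, ∀ u ∈ F, S g \ S u ⊆ Iio n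

variable {S : ι → Set ℕ} {L U : Set ι}

namespace Condition

structure Le (q p : Condition S L U) : Prop where
  n_le : p.n ≤ q.n
  F_subset : p.F ⊆ q.F
  G_subset : p.G ⊆ q.G
  mem_s_iff : ∀ m < p.n, m ∈ q.s ↔ m ∈ p.s
  mem_of_mem_s : ∀ m ∈ q.s, p.n ≤ m → ∀ u ∈ p.F, m ∈ S u
  mem_s_of_mem : ∀ g ∈ p.G, ∀ m ∈ S g, p.n ≤ m → m < q.n → m ∈ q.s

instance : PartialOrder (Condition S L U) where
  le := Le
  le_refl p := ⟨le_rfl, subset_rfl, subset_rfl, fun _ _ => Iff.rfl,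
    fun m hm hnm => absurd (p.s_lt m hm) hnm.not_gt, fun _ _ _ _ h₁ h₂ => absurd h₂ h₁.not_gt⟩
  le_trans r q p hrq hqp := by
    refine ⟨hqp.n_le.trans hrq.n_le, hqp.F_subset.trans hrq.F_subset,
      hqp.G_subset.trans hrq.G_subset, fun m hm => ?_, fun m hm hpm u hu => ?_,
      fun g hg m hm hpm hmr => ?_⟩
    · rw [hrq.mem_s_iff m (hm.trans_le hqp.n_le), hqp.mem_s_iff m hm]
    · rcases lt_or_ge m q.n with hmq | hqm
      · exact hqp.mem_of_mem_s m ((hrq.mem_s_iff m hmq).1 hm) hpm u hu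
      · exact hrq.mem_of_mem_s m hm hqm u (hqp.F_subset hu)
    · rcases lt_or_ge m q.n with hmq | hqm
      · exact (hrq.mem_s_iff m hmq).2 (hqp.mem_s_of_mem g hg m hm hpm hmq)
      · exact hrq.mem_s_of_mem g (hqp.G_subset hg) m hm hqm hmr
  le_antisymm p q hpq hqp := by
    have hn : p.n = q.n := le_antisymm hqp.n_le hpq.n_le
    refine Condition.ext (Finset.ext fun m => ⟨fun hm => ?_, fun hm => ?_⟩) hn
      (hqp.F_subset.antisymm hpq.F_subset) (hqp.G_subset.antisymm hpq.G_subset)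
    · exact (hpq.mem_s_iff m (hn ▸ p.s_lt m hm)).1 hm
    · exact (hqp.mem_s_iff m (hn ▸ q.s_lt m hm)).1 hm

lemma le_of_subset {p q : Condition S L U} (hs : q.s = p.s) (hn : q.n = p.n) (hF : p.F ⊆ q.F)
    (hG : p.G ⊆ q.G) : q ≤ p :=
  ⟨hn.ge, hF, hG, fun _ _ => hs ▸ Iff.rfl, fun m hm hpm => absurd (p.s_lt m (hs ▸ hm)) hpm.not_gt,
    fun _ _ _ _ h₁ h₂ => absurd (hn ▸ h₂) h₁.not_gt⟩

noncomputable def extend (p : Condition S L U) (N : ℕ) (E : Set ℕ) : Condition S L U := by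
  classical exact
  { s := p.s ∪ (Finset.Ico p.n N).filter fun m => (∃ g ∈ p.G, m ∈ S g) ∨ m ∈ E
    n := max N p.n
    F := p.F
    G := p.G
    s_lt := fun m hm => by
      rcases Finset.mem_union.1 hm with hm | hm
      · exact (p.s_lt m hm).trans_le (le_max_right _ _)
      · exact (Finset.mem_Ico.1 (Finset.mem_filter.1 hm).1).2.trans_le (le_max_left _ _)
    F_subset := p.F_subset
    G_subset := p.G_subset
    sep := fun g hg u hu => (p.sep g hg u hu).trans (Iio_subset_Iio (le_max_right _ _)) }

section Extend

variable {p : Condition S L U} {N : ℕ} {E : Set ℕ}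

lemma mem_extend_s {m : ℕ} : m ∈ (p.extend N E).s ↔
    m ∈ p.s ∨ p.n ≤ m ∧ m < N ∧ ((∃ g ∈ p.G, m ∈ S g) ∨ m ∈ E) := by
  classical
  simp only [extend, Finset.mem_union, Finset.mem_filter, Finset.mem_Ico, and_assoc]

lemma extend_le (hE : ∀ m ∈ E, ∀ u ∈ p.F, m ∈ S u) : p.extend N E ≤ p := by
  refine ⟨le_max_right _ _, subset_rfl, subset_rfl, fun m hm => ?_, fun m hm hpm u hu => ?_,
    fun g hg m hm hpm hmN => mem_extend_s.2 (Or.inr ⟨hpm, ?_, Or.inl ⟨g, hg, hm⟩⟩)⟩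
  · rw [mem_extend_s, or_iff_left fun h => h.1.not_gt hm]
  · rcases mem_extend_s.1 hm with hm | ⟨-, -, ⟨g, hg, hgm⟩ | hEm⟩
    · exact absurd (p.s_lt m hm) hpm.not_gt
    · by_contra hum
      exact hpm.not_gt (p.sep g hg u hu ⟨hgm, hum⟩)
    · exact hE m hEm u hu
  · exact (lt_max_iff.1 hmN).resolve_right hpm.not_gt

lemma extend_empty_le : p.extend N ∅ ≤ p := extend_le (by simp)

end Extend

lemma denseBelow_n_ge (k : ℕ) : DenseBelow {p : Condition S L U | k ≤ p.n} :=
  fun p => ⟨p.extend k ∅, le_max_left k p.n, extend_empty_le⟩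

lemma denseBelow_mem_F (hLU : ∀ g ∈ L, ∀ u ∈ U, (S g \ S u).Finite) {u : ι} (hu : u ∈ U) :
    DenseBelow {p : Condition S L U | u ∈ p.F} := by
  classical
  intro p
  obtain ⟨N, hN⟩ := ((p.G.finite_toSet.biUnion fun g hg =>
    hLU g (p.G_subset hg) u hu).bddAbove : BddAbove (⋃ g ∈ p.G, S g \ S u))
  let q := p.extend (N + 1) ∅
  refine ⟨{ q with
    F := insert u q.F
    F_subset := Finset.coe_insert u q.F ▸ insert_subset hu q.F_subset
    sep := fun g hg v hv => ?_ }, Finset.mem_insert_self u q.F, ?_⟩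
  · rcases Finset.mem_insert.1 hv with rfl | hv
    · exact fun m hm => (Nat.lt_succ_of_le (hN (mem_biUnion hg hm))).trans_le (le_max_left _ _)
    · exact q.sep g hg v hv
  · exact le_trans (le_of_subset (p := q) rfl rfl (Finset.subset_insert u q.F) subset_rfl)
      extend_empty_le

lemma denseBelow_mem_G (hLU : ∀ g ∈ L, ∀ u ∈ U, (S g \ S u).Finite) {g : ι} (hg : g ∈ L) :
    DenseBelow {p : Condition S L U | g ∈ p.G} := by
  classical
  intro p
  obtain ⟨N, hN⟩ := ((p.F.finite_toSet.biUnion fun u hu =>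
    hLU g hg u (p.F_subset hu)).bddAbove : BddAbove (⋃ u ∈ p.F, S g \ S u))
  let q := p.extend (N + 1) ∅
  refine ⟨{ q with
    G := insert g q.G
    G_subset := Finset.coe_insert g q.G ▸ insert_subset hg q.G_subset
    sep := fun h hh u hu => ?_ }, Finset.mem_insert_self g q.G, ?_⟩
  · rcases Finset.mem_insert.1 hh with rfl | hh
    · exact fun m hm => (Nat.lt_succ_of_le (hN (mem_biUnion hu hm))).trans_le (le_max_left _ _)
    · exact q.sep h hh u hu
  · exact le_trans (le_of_subset (p := q) rfl rfl subset_rfl (Finset.subset_insert g q.G))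
      extend_empty_le

lemma denseBelow_exists_mem_s
    (hU : ∀ F : Finset ι, ↑F ⊆ U → ∃ u ∈ U, ∀ v ∈ F, (S u \ S v).Finite) {a : ι}
    (ha : ∀ u ∈ U, (S a ∩ S u).Infinite) (k : ℕ) :
    DenseBelow {p : Condition S L U | ∃ m ∈ p.s, k < m ∧ m ∈ S a} := by
  intro p
  obtain ⟨u, hu, hF⟩ := hU p.F p.F_subset
  obtain ⟨m, ⟨⟨hma, hmu⟩, hmF⟩, hm⟩ :=
    ((ha u hu).sdiff (p.F.finite_toSet.biUnion hF)).exists_gt (max k p.n)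
  have hmF : ∀ v ∈ p.F, m ∈ S v := fun v hv => by_contra fun h => hmF (mem_biUnion hv ⟨hmu, h⟩)
  rw [max_lt_iff] at hm
  exact ⟨p.extend (m + 1) {m},
    ⟨m, mem_extend_s.2 (Or.inr ⟨hm.2.le, m.lt_succ_self, Or.inr rfl⟩), hm.1, hma⟩,
    extend_le (by simpa using hmF)⟩

lemma denseBelow_exists_not_mem_s
    (hL : ∀ G : Finset ι, ↑G ⊆ L → ∃ g ∈ L, ∀ h ∈ G, (S h \ S g).Finite) {a : ι}
    (ha : ∀ g ∈ L, (S a \ S g).Infinite) (k : ℕ) :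
    DenseBelow {p : Condition S L U | ∃ m < p.n, k < m ∧ m ∈ S a ∧ m ∉ p.s} := by
  intro p
  obtain ⟨g, hg, hG⟩ := hL p.G p.G_subset
  obtain ⟨m, ⟨⟨hma, hmg⟩, hmG⟩, hm⟩ :=
    ((ha g hg).sdiff (p.G.finite_toSet.biUnion hG)).exists_gt (max k p.n)
  rw [max_lt_iff] at hm
  refine ⟨p.extend (m + 1) ∅, ⟨m, m.lt_succ_self.trans_le (le_max_left _ _), hm.1, hma, ?_⟩,
    extend_empty_le⟩
  intro hms
  rcases mem_extend_s.1 hms with hms | ⟨-, -, ⟨h, hh, hmh⟩ | hmE⟩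
  · exact (p.s_lt m hms).not_gt hm.2
  · exact hmG (mem_biUnion hh ⟨hmh, hmg⟩)
  · exact hmE

lemma exists_le_le_of_eq {p q : Condition S L U} (hs : p.s = q.s) (hn : p.n = q.n)
    (hG : p.G = q.G) : ∃ r, r ≤ p ∧ r ≤ q := by
  classical
  let r : Condition S L U := { p with
    F := p.F ∪ q.F
    F_subset := by rw [Finset.coe_union]; exact union_subset p.F_subset q.F_subset
    sep := fun g hg u hu => by
      rcases Finset.mem_union.1 hu with hu | hu
      · exact p.sep g hg u hu
      · exact hn ▸ q.sep g (hG ▸ hg) u hu }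
  exact ⟨r, le_of_subset rfl rfl Finset.subset_union_left subset_rfl,
    le_of_subset hs hn Finset.subset_union_right hG.ge⟩

/-- Conditions agreeing in `s`, `n` and `G` are compatible, and as `L` is countable there are
only countably many such triples. -/
lemma isCCC (hL : L.Countable) : IsCCC (Condition S L U) := by
  intro An hAn
  have hinj : InjOn (fun p : Condition S L U => (p.s, p.n, p.G)) An := by
    intro p hp q hq hpq
    simp only [Prod.mk.injEq] at hpq
    by_contra hne
    exact hAn p hp q hq hne (exists_le_le_of_eq hpq.1 hpq.2.1 hpq.2.2)
  refine countable_of_injective_of_countable_image hinj (Countable.mono ?_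
    (countable_univ.prod (countable_univ.prod
      ((countable_ofPred_finite_subset hL).preimage Finset.coe_injective))))
  rintro _ ⟨p, -, rfl⟩
  exact ⟨trivial, trivial, p.G.finite_toSet, p.G_subset⟩

instance : Nonempty (Condition S L U) :=
  ⟨⟨∅, 0, ∅, ∅, by simp, by simp, by simp, by simp⟩⟩

end Condition

section Generic

open Condition

variable {Gf : Set (Condition S L U)} {p : Condition S L U}

def generic (Gf : Set (Condition S L U)) : Set ℕ := ⋃ p ∈ Gf, (p.s : Set ℕ)

lemma mem_generic_iff (hGf : IsPosetFilter Gf) (hp : p ∈ Gf) {m : ℕ} (hm : m < p.n) :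
    m ∈ generic Gf ↔ m ∈ p.s := by
  refine ⟨fun h => ?_, fun h => mem_biUnion hp h⟩
  obtain ⟨q, hq, hmq⟩ := mem_iUnion₂.1 h
  obtain ⟨r, -, hrp, hrq⟩ := hGf.2.2 p hp q hq
  exact (hrp.mem_s_iff m hm).1 ((hrq.mem_s_iff m (q.s_lt m hmq)).2 hmq)

lemma generic_diff_subset (hGf : IsPosetFilter Gf) (hp : p ∈ Gf) {u : ι} (hu : u ∈ p.F) :
    generic Gf \ S u ⊆ p.s := by
  rintro m ⟨hm, hmu⟩
  obtain ⟨q, hq, hmq⟩ := mem_iUnion₂.1 hm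
  obtain ⟨r, -, hrp, hrq⟩ := hGf.2.2 p hp q hq
  have hmr : m ∈ r.s := (hrq.mem_s_iff m (q.s_lt m hmq)).2 hmq
  rcases lt_or_ge m p.n with h | h
  · exact (hrp.mem_s_iff m h).1 hmr
  · exact absurd (hrp.mem_of_mem_s m hmr h u hu) hmu

lemma diff_generic_subset (hGf : IsPosetFilter Gf) (hn : ∀ k, ∃ q ∈ Gf, k ≤ q.n) (hp : p ∈ Gf)
    {g : ι} (hg : g ∈ p.G) : S g \ generic Gf ⊆ Iio p.n := by
  rintro m ⟨hmg, hm⟩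
  by_contra h
  obtain ⟨q, hq, hqn⟩ := hn (m + 1)
  obtain ⟨r, hr, hrp, hrq⟩ := hGf.2.2 p hp q hq
  exact hm (mem_biUnion hr (hrp.mem_s_of_mem g hg m hmg (not_lt.1 h)
    (m.lt_succ_self.trans_le (hqn.trans hrq.n_le))))

end Generic

variable (S L U) in
def requirements (P N : Set ι) : Set (Set (Condition S L U)) :=
  range (fun u : U => {p | ↑u ∈ p.F}) ∪ range (fun g : L => {p | ↑g ∈ p.G}) ∪
    range (fun k : ℕ => {p | k ≤ p.n}) ∪
    range (fun x : P × ℕ => {p | ∃ m ∈ p.s, x.2 < m ∧ m ∈ S x.1}) ∪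
    range (fun x : N × ℕ => {p | ∃ m < p.n, x.2 < m ∧ m ∈ S x.1 ∧ m ∉ p.s})

lemma denseBelow_of_mem_requirements {P N : Set ι} (hLU : ∀ g ∈ L, ∀ u ∈ U, (S g \ S u).Finite)
    (hL_dir : ∀ G : Finset ι, ↑G ⊆ L → ∃ g ∈ L, ∀ h ∈ G, (S h \ S g).Finite)
    (hU_dir : ∀ F : Finset ι, ↑F ⊆ U → ∃ u ∈ U, ∀ v ∈ F, (S u \ S v).Finite)
    (hPU : ∀ a ∈ P, ∀ u ∈ U, (S a ∩ S u).Infinite) (hNL : ∀ a ∈ N, ∀ g ∈ L, (S a \ S g).Infinite) :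
    ∀ D ∈ requirements S L U P N, DenseBelow D := by
  rintro D ((((⟨⟨u, hu⟩, rfl⟩ | ⟨⟨g, hg⟩, rfl⟩) | ⟨k, rfl⟩) | ⟨⟨⟨a, ha⟩, k⟩, rfl⟩) |
    ⟨⟨⟨a, ha⟩, k⟩, rfl⟩)
  · exact Condition.denseBelow_mem_F hLU hu
  · exact Condition.denseBelow_mem_G hLU hg
  · exact Condition.denseBelow_n_ge k
  · exact Condition.denseBelow_exists_mem_s hU_dir (hPU a ha) k
  · exact Condition.denseBelow_exists_not_mem_s hL_dir (hNL a ha) k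

lemma mk_requirements_lt {P N : Set ι} (hL : L.Countable) (hU : #U < 𝔠) (hP : #P < 𝔠)
    (hN : #N < 𝔠) : #(requirements S L U P N) < 𝔠 := by
  have hunion : ∀ s t : Set (Set (Condition S L U)), #s < 𝔠 → #t < 𝔠 → #(s ∪ t : Set _) < 𝔠 :=
    fun s t hs ht => (mk_union_le s t).trans_lt (add_lt_of_lt aleph0_le_continuum hs ht)
  have hrange : ∀ {α : Type} (f : α → Set (Condition S L U)), #α < 𝔠 → #(range f) < 𝔠 :=
    fun _ h => mk_range_le.trans_lt h
  have hℕ : #ℕ < 𝔠 := mk_nat ▸ aleph0_lt_continuum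
  have hprod : ∀ s : Set ι, #s < 𝔠 → #(s × ℕ) < 𝔠 := fun s hs => by
    simpa using mul_lt_of_lt aleph0_le_continuum hs hℕ
  exact hunion _ _ (hunion _ _ (hunion _ _ (hunion _ _ (hrange _ hU)
    (hrange _ (hL.le_aleph0.trans_lt aleph0_lt_continuum))) (hrange _ hℕ))
    (hrange _ (hprod P hP))) (hrange _ (hprod N hN))

end Interpolation

open Interpolation in
theorem MartinsAxiom.exists_interpolant (ma : MartinsAxiom) {ι : Type} (S : ι → Set ℕ)
    {L U P N : Set ι} (hL : L.Countable) (hU : #U < 𝔠) (hP : #P < 𝔠) (hN : #N < 𝔠)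
    (hLU : ∀ g ∈ L, ∀ u ∈ U, (S g \ S u).Finite)
    (hL_dir : ∀ G : Finset ι, ↑G ⊆ L → ∃ g ∈ L, ∀ h ∈ G, (S h \ S g).Finite)
    (hU_dir : ∀ F : Finset ι, ↑F ⊆ U → ∃ u ∈ U, ∀ v ∈ F, (S u \ S v).Finite)
    (hPU : ∀ a ∈ P, ∀ u ∈ U, (S a ∩ S u).Infinite)
    (hNL : ∀ a ∈ N, ∀ g ∈ L, (S a \ S g).Infinite) :
    ∃ C : Set ℕ, (∀ g ∈ L, (S g \ C).Finite) ∧ (∀ u ∈ U, (C \ S u).Finite) ∧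
      (∀ a ∈ P, (S a ∩ C).Infinite) ∧ (∀ a ∈ N, (S a \ C).Infinite) := by
  obtain ⟨Gf, hGf, hmeet⟩ := ma (Condition S L U) (Condition.isCCC hL) _
    (denseBelow_of_mem_requirements hLU hL_dir hU_dir hPU hNL) (mk_requirements_lt hL hU hP hN)
  have hn : ∀ k, ∃ q ∈ Gf, k ≤ q.n := fun k => hmeet _ (.inl <| .inl <| .inr ⟨k, rfl⟩)
  refine ⟨generic Gf, fun g hg => ?_, fun u hu => ?_, fun a ha => ?_, fun a ha => ?_⟩
  · obtain ⟨p, hp, hgp⟩ := hmeet _ (.inl <| .inl <| .inl <| .inr ⟨⟨g, hg⟩, rfl⟩)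
    exact (finite_Iio p.n).subset (diff_generic_subset hGf hn hp hgp)
  · obtain ⟨p, hp, hup⟩ := hmeet _ (.inl <| .inl <| .inl <| .inl ⟨⟨u, hu⟩, rfl⟩)
    exact p.s.finite_toSet.subset (generic_diff_subset hGf hp hup)
  · refine infinite_of_forall_exists_gt fun k => ?_
    obtain ⟨p, hp, m, hm, hkm, hma⟩ := hmeet _ (.inl <| .inr ⟨⟨⟨a, ha⟩, k⟩, rfl⟩)
    exact ⟨m, ⟨hma, mem_biUnion hp hm⟩, hkm⟩
  · refine infinite_of_forall_exists_gt fun k => ?_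
    obtain ⟨p, hp, m, hmn, hkm, hma, hm⟩ := hmeet _ (.inr ⟨⟨⟨a, ha⟩, k⟩, rfl⟩)
    exact ⟨m, ⟨hma, fun h => hm ((mem_generic_iff hGf hp hmn).1 h)⟩, hkm⟩

namespace PomegaFin

def ofSet (s : Set ℕ) : PomegaFin := ↑(fun m => m ∈ s)

lemma ofSet_surjective : Function.Surjective ofSet :=
  fun x => x.inductionOn fun f => ⟨{m | f m}, rfl⟩

lemma ofSet_inter (s t : Set ℕ) : ofSet (s ∩ t) = ofSet s ⊓ ofSet t := rfl

lemma ofSet_diff (s t : Set ℕ) : ofSet (s \ t) = ofSet s ⊓ (ofSet t)ᶜ := rfl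

lemma ofSet_le_ofSet {s t : Set ℕ} : ofSet s ≤ ofSet t ↔ (s \ t).Finite := by
  simp only [ofSet, Filter.Germ.coe_le, EventuallyLE, eventually_cofinite, le_Prop_eq,
    Classical.not_imp]
  rfl

lemma ofSet_eq_bot {s : Set ℕ} : ofSet s = ⊥ ↔ s.Finite := by
  rw [← le_bot_iff, show (⊥ : PomegaFin) = ofSet ∅ from rfl, ofSet_le_ofSet, sdiff_empty]

end PomegaFin

section Embedding

variable {B : Type} [BooleanAlgebra B] {A : Set B} {b : B} {ψ : B → PomegaFin}

open PomegaFin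

theorem MartinsAxiom.exists_interpolant_of_isBAHomOn (ma : MartinsAxiom)
    (hA : IsBoolSubalgebra A) (hAcard : #A < 𝔠) (hb : {a ∈ A | a ≤ b}.Countable)
    (hψ : IsBAHomOn A ψ) (hψinj : InjOn ψ A) {S : B → Set ℕ} (hS : ∀ a, ofSet (S a) = ψ a) :
    ∃ C : Set ℕ, (∀ a ∈ A, a ≤ b → (S a \ C).Finite) ∧ (∀ u ∈ A, b ≤ u → (C \ S u).Finite) ∧
      (∀ a ∈ A, a ⊓ b ≠ ⊥ → (S a ∩ C).Infinite) ∧ (∀ a ∈ A, a ⊓ bᶜ ≠ ⊥ → (S a \ C).Infinite) := by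
  obtain ⟨bot_mem, top_mem, sup_mem, inf_mem, compl_mem⟩ := hA
  obtain ⟨map_bot, -, -, map_inf, map_compl⟩ := hψ
  have hS_le : ∀ a ∈ A, ∀ a' ∈ A, a ≤ a' → (S a \ S a').Finite := fun a ha a' ha' h => by
    rw [← ofSet_le_ofSet, hS, hS, ← inf_eq_left, ← map_inf a ha a' ha', inf_eq_left.2 h]
  have hinfinite : ∀ {s : Set ℕ} {a : B}, a ∈ A → a ≠ ⊥ → ofSet s = ψ a → s.Infinite :=
    fun ha h hs hfin => h (hψinj ha bot_mem (by rw [map_bot, ← hs, ofSet_eq_bot.2 hfin]))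
  have hsmall : ∀ p : B → Prop, #{a ∈ A | p a} < 𝔠 := fun _ =>
    (mk_le_mk_of_subset (sep_subset _ _)).trans_lt hAcard
  have hsup : ∀ G : Finset B, ↑G ⊆ {a ∈ A | a ≤ b} → G.sup id ∈ {a ∈ A | a ≤ b} := fun G hG =>
    ⟨Finset.sup_mem A bot_mem sup_mem G id fun _ hg => (hG hg).1,
      Finset.sup_le fun _ hg => (hG hg).2⟩
  have hinf : ∀ F : Finset B, ↑F ⊆ {u ∈ A | b ≤ u} → F.inf id ∈ {u ∈ A | b ≤ u} := fun F hF =>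
    ⟨Finset.inf_mem A top_mem inf_mem F id fun _ hu => (hF hu).1,
      Finset.le_inf fun _ hu => (hF hu).2⟩
  obtain ⟨C, hCL, hCU, hCP, hCN⟩ := ma.exists_interpolant S (L := {a ∈ A | a ≤ b})
    (U := {u ∈ A | b ≤ u}) (P := {a ∈ A | a ⊓ b ≠ ⊥}) (N := {a ∈ A | a ⊓ bᶜ ≠ ⊥}) hb
    (hsmall _) (hsmall _) (hsmall _) (fun g hg u hu => hS_le g hg.1 u hu.1 (hg.2.trans hu.2))
    (fun G hG => ⟨_, hsup G hG, fun h hh => hS_le h (hG hh).1 _ (hsup G hG).1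
      (Finset.le_sup (f := id) hh)⟩)
    (fun F hF => ⟨_, hinf F hF, fun v hv => hS_le _ (hinf F hF).1 v (hF hv).1
      (Finset.inf_le (f := id) hv)⟩)
    (fun a ha u hu => hinfinite (inf_mem a ha.1 u hu.1)
      (ne_bot_of_le_ne_bot ha.2 (inf_le_inf_left a hu.2))
      (by rw [ofSet_inter, hS, hS, map_inf a ha.1 u hu.1]))
    (fun a ha g hg => hinfinite (inf_mem a ha.1 _ (compl_mem g hg.1))
      (ne_bot_of_le_ne_bot ha.2 (inf_le_inf_left a (compl_le_compl hg.2)))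
      (by rw [ofSet_diff, hS, hS, map_inf a ha.1 _ (compl_mem g hg.1), map_compl g hg.1]))
  exact ⟨C, fun a ha h => hCL a ⟨ha, h⟩, fun u hu h => hCU u ⟨hu, h⟩, fun a ha h => hCP a ⟨ha, h⟩,
    fun a ha h => hCN a ⟨ha, h⟩⟩

theorem MartinsAxiom.exists_inf_eq_bot_iff (ma : MartinsAxiom) (hA : IsBoolSubalgebra A)
    (hAcard : #A < 𝔠) (hb : {a ∈ A | a ≤ b}.Countable) (hψ : IsBAHomOn A ψ)
    (hψinj : InjOn ψ A) :
    ∃ c : PomegaFin, (∀ a ∈ A, a ⊓ b = ⊥ ↔ ψ a ⊓ c = ⊥) ∧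
      (∀ a ∈ A, a ⊓ bᶜ = ⊥ ↔ ψ a ⊓ cᶜ = ⊥) := by
  obtain ⟨rep, hrep⟩ := ofSet_surjective.hasRightInverse
  have hS : ∀ a, ofSet ((rep ∘ ψ) a) = ψ a := fun a => hrep (ψ a)
  obtain ⟨C, hCL, hCU, hCP, hCN⟩ := ma.exists_interpolant_of_isBAHomOn hA hAcard hb hψ hψinj hS
  refine ⟨ofSet C, fun a ha => ⟨fun h => ?_, fun h => ?_⟩, fun a ha => ⟨fun h => ?_, fun h => ?_⟩⟩
  · have hC : ofSet C ≤ (ψ a)ᶜ := by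
      rw [← hψ.2.2.2.2 a ha, ← hS, ofSet_le_ofSet]
      exact hCU _ (hA.2.2.2.2 a ha) (le_compl_iff_disjoint_left.2 (disjoint_iff.2 h))
    exact disjoint_iff.1 (le_compl_iff_disjoint_left.1 hC)
  · by_contra hab
    rw [← hS, ← ofSet_inter, ofSet_eq_bot] at h
    exact hCP a ha hab h
  · rw [← hS, ← ofSet_diff, ofSet_eq_bot]
    exact hCL a ha (disjoint_compl_right_iff.1 (disjoint_iff.2 h))
  · by_contra hab
    rw [← hS, ← ofSet_diff, ofSet_eq_bot] at h
    exact hCN a ha hab h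

end Embedding

theorem statement10_general (ma : MartinsAxiom)
    (B : Type) [BooleanAlgebra B] (A : Set B) (hA : IsBoolSubalgebra A)
    (hAcard : #A < Cardinal.continuum) (b : B)
    (hb : ({a ∈ A | a ≤ b}).Countable)
    (ψ : B → PomegaFin) (hψ : IsBAHomOn A ψ) (hψinj : Set.InjOn ψ A) :
    ∃ φ : B → PomegaFin, IsBAHomOn (boolGen (A ∪ {b})) φ ∧
      Set.InjOn φ (boolGen (A ∪ {b})) ∧ Set.EqOn φ ψ A := by
  obtain ⟨c, hc, hc_compl⟩ := ma.exists_inf_eq_bot_iff hA hAcard hb hψ hψinj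
  exact exists_extension_of_eq_bot_iff hA hψ hc hc_compl

/-- Under `MA + ¬CH`, one-step extension of embeddings into `P(ω)/Fin`: an injective
homomorphism defined on a subalgebra `A` of size `< 𝔠` extends over any element `b`
such that `{a ∈ A : a ≤ b}` is countable. -/
theorem statement10 (ma : MartinsAxiom) (nch : Cardinal.aleph 1 < Cardinal.continuum)
    (B : Type) [BooleanAlgebra B] (A : Set B) (hA : IsBoolSubalgebra A)
    (hAcard : #A < Cardinal.continuum) (b : B)
    (hb : ({a ∈ A | a ≤ b}).Countable)
    (ψ : B → PomegaFin) (hψ : IsBAHomOn A ψ) (hψinj : Set.InjOn ψ A) :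
    ∃ φ : B → PomegaFin, IsBAHomOn (boolGen (A ∪ {b})) φ ∧
      Set.InjOn φ (boolGen (A ∪ {b})) ∧ Set.EqOn φ ψ A :=
  statement10_general ma B A hA hAcard b hb ψ hψ hψinj
end

section
/- Let Y be a compactification of the discrete space ℕ, given by an injective map d : ℕ → Y with dense range and each d(n) isolated in Y, with remainder R = Y \ d(ℕ), and let Z₀ = {f ∈ C(Y) : f(y) = 0 for every y ∈ R}, a closed linear subspace of C(Y). If Z₀ is not complemented in C(Y), i.e., there is no bounded linear projection of C(Y) onto Z₀, then there exists a nontrivial twisted sum of c₀ and C(R). -/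
open Cardinal Set Filter Topology

/-- The Banach space `c₀` of real sequences converging to `0`, with the sup norm. -/
abbrev czero : Type := ZeroAtInftyContinuousMap ℕ ℝ

/-- There exists a nontrivial twisted sum of `Y` and `X`: a short exact sequence
`0 → Y → Z → X → 0` of Banach spaces in which the image of `Y` is not complemented. -/
def ExistsNontrivialTwistedSum (Y X : Type) [NormedAddCommGroup Y] [NormedSpace ℝ Y]
    [NormedAddCommGroup X] [NormedSpace ℝ X] : Prop :=
  ∃ (Z : Type) (_ : NormedAddCommGroup Z) (_ : NormedSpace ℝ Z) (_ : CompleteSpace Z)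
    (j : Y →L[ℝ] Z) (q : Z →L[ℝ] X),
      Function.Injective j ∧ IsClosed (Set.range j) ∧ Function.Surjective q ∧
      LinearMap.ker (q : Z →ₗ[ℝ] X) = LinearMap.range (j : Y →ₗ[ℝ] Z) ∧
      ¬(LinearMap.range (j : Y →ₗ[ℝ] Z)).ClosedComplemented
/-- The canonical copy of `c₀` in `C(Y)`: the continuous functions vanishing at every
point of the remainder `Y \ d(ℕ)`. -/
def Zsub (Y : Type) [TopologicalSpace Y] [CompactSpace Y] (d : ℕ → Y) :
    Submodule ℝ C(Y, ℝ) where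
  carrier := {f : C(Y, ℝ) | ∀ y : Y, y ∉ Set.range d → f y = 0}
  add_mem' := fun hf hg y hy => by simp [hf y hy, hg y hy]
  zero_mem' := fun y hy => rfl
  smul_mem' := fun c f hf y hy => by simp [hf y hy]

/-!
The twisted sum is `C(Y)` itself. Extension by zero embeds `c₀` in `C(Y)` with range exactly
`Zsub Y d`: a compact set of isolated points is finite, so a continuous function vanishing on the
remainder `R` tends to `0` along `d`. Restriction to `R` maps `C(Y)` onto `C(R)` by Tietze, with
kernel `Zsub Y d`. The copy of `c₀` is then uncomplemented by hypothesis.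
-/

open Function

namespace Compactification

variable {Y : Type} {d : ℕ → Y}

theorem norm_extend_zero_le (f : czero) (y : Y) : ‖extend d f 0 y‖ ≤ ‖f‖ := by
  classical
  rw [extend_def]
  split_ifs
  · rw [← ZeroAtInftyContinuousMap.norm_toBCF_eq_norm]
    exact f.toBCF.norm_coe_le_norm _
  · simp

variable [TopologicalSpace Y]

theorem isClosed_compl_range (hiso : ∀ n, IsOpen ({d n} : Set Y)) : IsClosed (range d)ᶜ := by
  rw [isClosed_compl_iff, ← iUnion_singleton_eq_range]
  exact isOpen_iUnion hiso

theorem _root_.IsCompact.finite_of_subset_range {K : Set Y} (hK : IsCompact K)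
    (hiso : ∀ n, IsOpen ({d n} : Set Y)) (hKd : K ⊆ range d) : K.Finite := by
  obtain ⟨t, ht⟩ := hK.elim_finite_subcover (fun n => {d n}) hiso
    (by rwa [iUnion_singleton_eq_range])
  refine (t.finite_toSet.image d).subset fun y hy => ?_
  obtain ⟨n, hn, rfl⟩ := mem_iUnion₂.1 (ht hy)
  exact ⟨n, hn, rfl⟩

theorem continuous_extend_zero [T1Space Y] {E : Type*} [TopologicalSpace E] [Zero E]
    (hiso : ∀ n, IsOpen ({d n} : Set Y)) {g : ℕ → E} (hg : Tendsto g cofinite (𝓝 0)) :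
    Continuous (extend d g 0) := by
  classical
  refine continuous_iff_continuousAt.2 fun y => ?_
  by_cases hy : y ∈ range d
  · obtain ⟨n, rfl⟩ := hy
    rw [ContinuousAt, (isOpen_singleton_iff_nhds_eq_pure _).1 (hiso n)]
    exact tendsto_pure_nhds _ _
  · rw [ContinuousAt, extend_apply' _ _ _ (by simpa using hy)]
    intro U hU
    have hfin : {n | g n ∉ U}.Finite := hg hU
    rw [mem_map]
    filter_upwards [(hfin.image d).isClosed.isOpen_compl.mem_nhds
      fun h => hy (image_subset_range _ _ h)] with z hz
    rw [mem_preimage, extend_def]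
    split_ifs with h
    · by_contra hgU
      exact hz ⟨_, hgU, h.choose_spec⟩
    · exact mem_of_mem_nhds hU

theorem tendsto_comp_cofinite_zero [CompactSpace Y] {E : Type*} [TopologicalSpace E] [Zero E]
    (hinj : Injective d) (hiso : ∀ n, IsOpen ({d n} : Set Y)) {f : C(Y, E)}
    (hf : ∀ y ∉ range d, f y = 0) : Tendsto (f ∘ d) cofinite (𝓝 0) := by
  intro U hU
  obtain ⟨V, hVU, hV, h0V⟩ := mem_nhds_iff.1 hU
  have hK : (f ⁻¹' Vᶜ).Finite :=
    (hV.isClosed_compl.preimage f.continuous).isCompact.finite_of_subset_range hiso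
      fun y hy => by_contra fun hyd => hy (hf y hyd ▸ h0V)
  exact mem_cofinite.2 ((hK.preimage hinj.injOn).subset fun n hn hV' => hn (hVU hV'))

variable [CompactSpace Y] [T1Space Y]

noncomputable def extendByZero (hiso : ∀ n, IsOpen ({d n} : Set Y)) : czero →L[ℝ] C(Y, ℝ) :=
  LinearMap.mkContinuous
    { toFun := fun f => ⟨extend d f 0, continuous_extend_zero hiso <| by
        simpa [Nat.cofinite_eq_atTop] using f.zero_at_infty'⟩
      map_add' := fun f g =>
        ContinuousMap.ext <| congrFun <| (ExtendByZero.linearMap ℝ d).map_add f g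
      map_smul' := fun c f =>
        ContinuousMap.ext <| congrFun <| (ExtendByZero.linearMap ℝ d).map_smul c f }
    1 fun f => by
      rw [one_mul]
      exact (ContinuousMap.norm_le _ (norm_nonneg f)).2 (norm_extend_zero_le f)

@[simp]
theorem extendByZero_apply (hiso : ∀ n, IsOpen ({d n} : Set Y)) (f : czero) (y : Y) :
    extendByZero hiso f y = extend d f 0 y :=
  rfl

theorem injective_extendByZero (hinj : Injective d) (hiso : ∀ n, IsOpen ({d n} : Set Y)) :
    Injective (extendByZero hiso) := fun f g hfg =>
  ZeroAtInftyContinuousMap.ext fun n => by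
    simpa [hinj.extend_apply] using DFunLike.congr_fun hfg (d n)

theorem range_extendByZero (hinj : Injective d) (hiso : ∀ n, IsOpen ({d n} : Set Y)) :
    LinearMap.range (extendByZero hiso : czero →ₗ[ℝ] C(Y, ℝ)) = Zsub Y d := by
  ext f
  constructor
  · rintro ⟨g, rfl⟩ y hy
    exact extend_apply' _ _ _ (by simpa using hy)
  · intro hf
    let g : czero := ⟨⟨f ∘ d, continuous_of_discreteTopology⟩, by
      simpa [Nat.cofinite_eq_atTop] using tendsto_comp_cofinite_zero hinj hiso hf⟩
    refine ⟨g, ContinuousMap.ext fun y => ?_⟩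
    by_cases hy : y ∈ range d
    · obtain ⟨n, rfl⟩ := hy
      simp [g, hinj.extend_apply]
    · simp [extend_apply' _ _ _ (by simpa using hy), (hf y hy).symm]

end Compactification

namespace ContinuousMap

variable {X : Type*} [TopologicalSpace X] [CompactSpace X] (s : Set X) [CompactSpace s]

noncomputable def restrictL : C(X, ℝ) →L[ℝ] C(s, ℝ) :=
  LinearMap.mkContinuous
    { toFun := fun f => f.restrict s
      map_add' := fun _ _ => rfl
      map_smul' := fun _ _ => rfl }
    1 fun f => by
      rw [one_mul]
      exact (ContinuousMap.norm_le _ (norm_nonneg f)).2 fun x => f.norm_coe_le_norm x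

theorem restrictL_surjective [NormalSpace X] (hs : IsClosed s) : Surjective (restrictL s) :=
  fun g => exists_restrict_eq hs g

theorem mem_ker_restrictL {f : C(X, ℝ)} :
    f ∈ LinearMap.ker (restrictL s : C(X, ℝ) →ₗ[ℝ] C(s, ℝ)) ↔ ∀ x ∈ s, f x = 0 := by
  rw [LinearMap.mem_ker]
  exact ⟨fun h x hx => DFunLike.congr_fun h ⟨x, hx⟩, fun h => ContinuousMap.ext fun x => h x x.2⟩

end ContinuousMap

/-- If the canonical copy of `c₀` in `C(Y)` is not complemented, where `Y` is a
compactification of `ℕ`, then there is a nontrivial twisted sum of `c₀` and `C(R)`,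
`R` the remainder of the compactification. -/
theorem statement11 (Y : Type) [TopologicalSpace Y] [CompactSpace Y] [T2Space Y]
    (d : ℕ → Y) (hinj : Function.Injective d)
    (hiso : ∀ n : ℕ, IsOpen ({d n} : Set Y))
    (hnc : ¬(Zsub Y d).ClosedComplemented) :
    haveI : CompactSpace ↥((Set.range d)ᶜ : Set Y) := by
      refine isCompact_iff_compactSpace.mp (IsClosed.isCompact ?_)
      rw [isClosed_compl_iff, Set.range_eq_iUnion]
      exact isOpen_iUnion hiso
    ExistsNontrivialTwistedSum czero C(((Set.range d)ᶜ : Set Y), ℝ) := by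
  open Compactification ContinuousMap in
  have hR : IsClosed (range d)ᶜ := isClosed_compl_range hiso
  have : CompactSpace ((range d)ᶜ : Set Y) := isCompact_iff_compactSpace.1 hR.isCompact
  have hrange := range_extendByZero hinj hiso
  have hker : LinearMap.ker (restrictL (range d)ᶜ : C(Y, ℝ) →ₗ[ℝ] C(((range d)ᶜ : Set Y), ℝ)) =
      Zsub Y d :=
    Submodule.ext fun _ => mem_ker_restrictL (range d)ᶜ
  have hclosed : IsClosed (Set.range (extendByZero hiso)) := by
    change IsClosed (LinearMap.range (extendByZero hiso : czero →ₗ[ℝ] C(Y, ℝ)) : Set C(Y, ℝ))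
    rw [hrange, ← hker]
    exact ContinuousLinearMap.isClosed_ker _
  exact ⟨C(Y, ℝ), inferInstance, inferInstance, inferInstance, extendByZero hiso,
    restrictL _, injective_extendByZero hinj hiso, hclosed, restrictL_surjective _ hR,
    hker.trans hrange.symm, hrange ▸ hnc⟩
end

section
/- Let K be a compact Hausdorff scattered space which is not separable. Then K does not carry a strictly positive measure: for every finite regular Borel measure μ on K there exists a nonempty open subset U of K with μ(U) = 0. -/
open Cardinal Set Filter Topology

/-- A topological space is scattered if every nonempty closed subset has a point
isolated in it. -/
def IsScattered (X : Type*) [TopologicalSpace X] : Prop :=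
  ∀ F : Set X, IsClosed F → F.Nonempty → ∃ p ∈ F, ∃ U : Set X, IsOpen U ∧ U ∩ F = {p}
/-- A nonseparable compact Hausdorff scattered space carries no strictly positive
measure: every finite regular Borel measure vanishes on some nonempty open set. -/
theorem statement14 (K : Type) [TopologicalSpace K] [CompactSpace K] [T2Space K]
    [MeasurableSpace K] [BorelSpace K]
    (hscat : IsScattered K) (hnonsep : ¬TopologicalSpace.SeparableSpace K)
    (μ : MeasureTheory.Measure K) (hfin : MeasureTheory.IsFiniteMeasure μ)
    (hreg : μ.Regular) :
    ∃ U : Set K, IsOpen U ∧ U.Nonempty ∧ μ U = 0 := by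
  by_contra h
  push_neg at h
  -- The set of isolated points
  set I : Set K := {p : K | IsOpen ({p} : Set K)} with hI
  -- I is dense: every nonempty open set contains an isolated point
  have hdense : Dense I := by
    rw [dense_iff_inter_open]
    intro U hU hUne
    obtain ⟨p, hpF, V, hV, hVF⟩ := hscat (closure U) isClosed_closure
      (hUne.mono subset_closure)
    have hpV : p ∈ V := by
      have : p ∈ V ∩ closure U := hVF ▸ rfl
      exact this.1
    have hpcl : p ∈ closure U := by
      have : p ∈ V ∩ closure U := hVF ▸ rfl
      exact this.2
    -- V ∩ U is nonempty since p ∈ closure U and V is open around p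
    obtain ⟨q, hqU, hqV⟩ := mem_closure_iff.mp hpcl V hV hpV
    have hsub : V ∩ U ⊆ {p} := hVF ▸ inter_subset_inter_right V subset_closure
    have hq : q = p := hsub ⟨hqU, hqV⟩
    have hVU : V ∩ U = {p} := by
      apply subset_antisymm hsub
      rintro x rfl
      exact ⟨hpV, hq ▸ hqV⟩
    refine ⟨p, hq ▸ hqV, ?_⟩
    show IsOpen ({p} : Set K)
    exact hVU ▸ (hV.inter hU)
  -- every isolated point has positive measure
  have hpos : ∀ p ∈ I, 0 < μ {p} := by
    intro p hp
    have := h {p} hp ⟨p, rfl⟩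
    exact pos_iff_ne_zero.mpr this
  -- only countably many atoms
  have hcnt : I.Countable := by
    have key : Set.Countable {p : K | 0 < μ ({p} : Set K)} :=
      MeasureTheory.Measure.countable_meas_pos_of_disjoint_iUnion
        (As := fun p : K => ({p} : Set K)) (fun p => measurableSet_singleton p)
        (fun p q hpq => by simpa [Function.onFun] using hpq)
    exact key.mono hpos
  exact hnonsep ⟨⟨I, hcnt, hdense⟩⟩
end
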